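/- arXiv:2305.08367 — 4 statements merged into one kernel-verified Lean document; each statement's English description precedes it below -/
import Mathlib

section
/- Let f : 2^{[n]} → ℝ be a monotone submodular set function with f(∅) = 0, and let 1 ≤ k ≤ n. Define S_0 = ∅ and, for t = 1, …, k, let S_t = S_{t−1} ∪ {j_t} where j_t ∈ [n] \ S_{t−1} maximizes the marginal gain Δ(j|S_{t−1}) over all j ∈ [n] \ S_{t−1}. Then f(S_k) ≥ (1 − 1/e) · max_{T ⊆ [n], |T| = k} f(T). -/
/-!
If `T` has `k` elements, submodularity bounds the joint gain of adding `T` to the current greedy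
set by the sum of the `k` single-element gains, hence by `k` times the greedy gain. So every greedy
step closes at least a `1/k` fraction of the gap `f T - f S_t`, and after `k` steps the gap is at
most `(1 - 1/k)^k f T ≤ f T / e`.
-/

open Finset

section SetFunction

variable {α : Type*} [DecidableEq α]

def marginalGain (f : Finset α → ℝ) (i : α) (A : Finset α) : ℝ :=
  f (insert i A) - f A

def Submodular (f : Finset α → ℝ) : Prop :=
  ∀ S T : Finset α, S ⊆ T → ∀ i ∉ T, marginalGain f i T ≤ marginalGain f i S

variable {f : Finset α → ℝ}

lemma marginalGain_of_mem {i : α} {A : Finset α} (hi : i ∈ A) : marginalGain f i A = 0 := by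
  rw [marginalGain, insert_eq_of_mem hi, sub_self]

lemma Submodular.sub_le_sum_marginalGain (hsub : Submodular f) (A B : Finset α) :
    f (A ∪ B) - f A ≤ ∑ i ∈ B, marginalGain f i A := by
  induction B using Finset.induction_on with
  | empty => simp
  | insert b B hb ih =>
    rw [sum_insert hb, union_insert]
    have hgain : marginalGain f b (A ∪ B) ≤ marginalGain f b A := by
      by_cases hbA : b ∈ A
      · rw [marginalGain_of_mem hbA, marginalGain_of_mem (mem_union_left B hbA)]
      · exact hsub A (A ∪ B) subset_union_left b (by simp [hbA, hb])
    rw [marginalGain] at hgain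
    linarith

lemma Submodular.sub_le_card_mul_marginalGain (hmono : Monotone f) (hsub : Submodular f)
    {A T : Finset α} {j : α} (hmax : ∀ i ∉ A, marginalGain f i A ≤ marginalGain f j A) :
    f T - f A ≤ #T * marginalGain f j A := by
  have hj : 0 ≤ marginalGain f j A := sub_nonneg.2 (hmono (subset_insert j A))
  calc f T - f A ≤ f (A ∪ T) - f A := by gcongr; exact hmono subset_union_right
    _ ≤ ∑ i ∈ T, marginalGain f i A := hsub.sub_le_sum_marginalGain A T
    _ ≤ ∑ _i ∈ T, marginalGain f j A := sum_le_sum fun i _ => by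
        by_cases hiA : i ∈ A
        · rwa [marginalGain_of_mem hiA]
        · exact hmax i hiA
    _ = #T * marginalGain f j A := by rw [sum_const, nsmul_eq_mul]

lemma Submodular.sub_insert_le_one_sub_inv_card_mul (hmono : Monotone f) (hsub : Submodular f)
    {A T : Finset α} {j : α} (hT : T.Nonempty)
    (hmax : ∀ i ∉ A, marginalGain f i A ≤ marginalGain f j A) :
    f T - f (insert j A) ≤ (1 - 1 / #T) * (f T - f A) := by
  have hcard : (0 : ℝ) < #T := by exact_mod_cast hT.card_pos
  have hfrac : (f T - f A) / #T ≤ marginalGain f j A := by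
    rw [div_le_iff₀ hcard, mul_comm]
    exact hsub.sub_le_card_mul_marginalGain hmono hmax
  rw [marginalGain] at hfrac
  linarith [show (1 - 1 / (#T : ℝ)) * (f T - f A) = f T - f A - (f T - f A) / #T by ring]

end SetFunction

lemma le_pow_mul_of_forall_le_mul {g : ℕ → ℝ} {c : ℝ} (hc : 0 ≤ c) {m : ℕ}
    (h : ∀ t < m, g (t + 1) ≤ c * g t) : g m ≤ c ^ m * g 0 := by
  induction m with
  | zero => simp
  | succ m ih =>
    calc g (m + 1) ≤ c * g m := h m (Nat.lt_add_one m)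
      _ ≤ c * (c ^ m * g 0) := by
          gcongr
          exact ih fun t ht => h t (ht.trans (Nat.lt_add_one m))
      _ = c ^ (m + 1) * g 0 := by ring

theorem greedy_submodular_cardinality_general
    (n k : ℕ) (hk1 : 1 ≤ k)
    (f : Finset (Fin n) → ℝ)
    (hmono : ∀ S T : Finset (Fin n), S ⊆ T → f S ≤ f T)
    (hsub : ∀ S T : Finset (Fin n), S ⊆ T → ∀ i ∉ T,
      f (insert i T) - f T ≤ f (insert i S) - f S)
    (hf0 : f ∅ = 0)
    (S : ℕ → Finset (Fin n)) (j : ℕ → Fin n)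
    (hS0 : S 0 = ∅)
    (hstep : ∀ t, 1 ≤ t → t ≤ k →
      j t ∉ S (t - 1) ∧ S t = insert (j t) (S (t - 1)) ∧
      ∀ i, i ∉ S (t - 1) →
        f (insert i (S (t - 1))) - f (S (t - 1)) ≤
          f (insert (j t) (S (t - 1))) - f (S (t - 1)))
    (T : Finset (Fin n)) (hT : T.card = k) :
    f (S k) ≥ (1 - 1 / Real.exp 1) * f T := by
  have hk : (1 : ℝ) ≤ k := by exact_mod_cast hk1
  have hT0 : T.Nonempty := card_pos.1 (hT ▸ hk1)
  have hgap : f T - f (S k) ≤ (1 - 1 / k) ^ k * (f T - f (S 0)) :=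
    le_pow_mul_of_forall_le_mul (g := fun t => f T - f (S t)) (sub_nonneg.2 (div_le_one_of_le₀ hk (by positivity)))
      fun t ht => by
        obtain ⟨-, hSt, hmax⟩ := hstep (t + 1) (by omega) ht
        simp only [add_tsub_cancel_right] at hSt hmax
        rw [hSt, ← hT]
        exact Submodular.sub_insert_le_one_sub_inv_card_mul hmono hsub hT0 hmax
  have hfT : 0 ≤ f T := hf0 ▸ hmono ∅ T (empty_subset T)
  have hexp := mul_le_mul_of_nonneg_right (Real.one_sub_div_pow_le_exp_neg (t := 1) hk) hfT
  rw [Real.exp_neg, inv_eq_one_div] at hexp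
  rw [hS0, hf0, sub_zero] at hgap
  linarith

/-- The greedy algorithm for monotone submodular maximization with a
cardinality constraint achieves a `(1 - 1/e)` approximation. -/
theorem greedy_submodular_cardinality
    (n k : ℕ) (hk1 : 1 ≤ k) (hkn : k ≤ n)
    (f : Finset (Fin n) → ℝ)
    (hmono : ∀ S T : Finset (Fin n), S ⊆ T → f S ≤ f T)
    (hsub : ∀ S T : Finset (Fin n), S ⊆ T → ∀ i ∉ T,
      f (insert i T) - f T ≤ f (insert i S) - f S)
    (hf0 : f ∅ = 0)
    (S : ℕ → Finset (Fin n)) (j : ℕ → Fin n)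
    (hS0 : S 0 = ∅)
    (hstep : ∀ t, 1 ≤ t → t ≤ k →
      j t ∉ S (t - 1) ∧ S t = insert (j t) (S (t - 1)) ∧
      ∀ i, i ∉ S (t - 1) →
        f (insert i (S (t - 1))) - f (S (t - 1)) ≤
          f (insert (j t) (S (t - 1))) - f (S (t - 1)))
    (T : Finset (Fin n)) (hT : T.card = k) :
    f (S k) ≥ (1 - 1 / Real.exp 1) * f T :=
  greedy_submodular_cardinality_general n k hk1 f hmono hsub hf0 S j hS0 hstep T hT
end

section
/- Let ε > 0, let f : 2^{[n]} → ℝ be a monotone submodular set function with f(∅) = 0, and let 1 ≤ k ≤ n. Suppose O : 2^{[n]} × [n] → ℝ is an approximate-marginal-gain oracle satisfying Δ(i|S) − ε ≤ O(S, i) ≤ Δ(i|S) + ε for every S ⊆ [n] and i ∈ [n] \ S. Define S_0 = ∅ and, for t = 1, …, k, let S_t = S_{t−1} ∪ {j_t} where j_t ∈ [n] \ S_{t−1} maximizes O(S_{t−1}, j) over all j ∈ [n] \ S_{t−1}. Then f(S_k) ≥ (1 − 1/e) · max_{T ⊆ [n], |T| = k} f(T) − k(2 − 1/e)ε. -/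
/-!
Submodularity bounds the gap `f T - f P` by the sum of the marginal gains of the elements of
`T \ P`, each of which is at most the greedy gain plus `2ε` because the oracle errs by at most `ε`
on both sides. Hence the gap `f T - 2kε - f (S t)` shrinks by a factor `1 - 1/k` in every step, and
`(1 - 1/k)^k ≤ 1/e`. When `f T < 2kε` the bound already follows from `f ≥ 0`.
-/

open Finset

section SetFunction

variable {α : Type*} [DecidableEq α] {f : Finset α → ℝ}

theorem le_add_sum_marginal_of_disjoint
    (hsub : ∀ S T : Finset α, S ⊆ T → ∀ i ∉ T,
      f (insert i T) - f T ≤ f (insert i S) - f S)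
    {P D : Finset α} (hPD : Disjoint P D) :
    f (P ∪ D) ≤ f P + ∑ i ∈ D, (f (insert i P) - f P) := by
  induction D using Finset.induction_on with
  | empty => simp
  | @insert a D haD ih =>
    rw [disjoint_insert_right] at hPD
    have hsub_a := hsub P (P ∪ D) subset_union_left a (by simp [hPD.1, haD])
    rw [union_insert, sum_insert haD]
    linarith [ih hPD.2]

theorem sub_le_sum_marginal (hmono : Monotone f)
    (hsub : ∀ S T : Finset α, S ⊆ T → ∀ i ∉ T,
      f (insert i T) - f T ≤ f (insert i S) - f S)
    (P T : Finset α) :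
    f T - f P ≤ ∑ i ∈ T \ P, (f (insert i P) - f P) := by
  have hT : f T ≤ f (P ∪ (T \ P)) := hmono (by simp)
  linarith [le_add_sum_marginal_of_disjoint hsub (disjoint_sdiff (s := P) (t := T))]

theorem sub_le_mul_approx_greedy_gain (hmono : Monotone f)
    (hsub : ∀ S T : Finset α, S ⊆ T → ∀ i ∉ T,
      f (insert i T) - f T ≤ f (insert i S) - f S)
    {ε : ℝ} (hε : 0 ≤ ε) {O : Finset α → α → ℝ} {P T : Finset α} {j : α} {k : ℕ}
    (hO : ∀ i ∉ P, f (insert i P) - f P - ε ≤ O P i ∧ O P i ≤ f (insert i P) - f P + ε)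
    (hj : j ∉ P) (hmax : ∀ i ∉ P, O P i ≤ O P j) (hT : #T ≤ k) :
    f T - f P ≤ k * (f (insert j P) - f P + 2 * ε) := by
  have hmarginal : ∀ i ∈ T \ P, f (insert i P) - f P ≤ f (insert j P) - f P + 2 * ε := by
    intro i hi
    have hiP := (mem_sdiff.mp hi).2
    linarith [(hO i hiP).1, (hO j hj).2, hmax i hiP]
  have hgain : 0 ≤ f (insert j P) - f P + 2 * ε := by
    linarith [hmono (subset_insert j P)]
  have hcard : (#(T \ P) : ℝ) ≤ k := by exact_mod_cast (card_le_card sdiff_subset).trans hT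
  calc f T - f P ≤ ∑ i ∈ T \ P, (f (insert i P) - f P) := sub_le_sum_marginal hmono hsub P T
    _ ≤ #(T \ P) * (f (insert j P) - f P + 2 * ε) :=
      (sum_le_sum hmarginal).trans_eq (by rw [sum_const, nsmul_eq_mul])
    _ ≤ k * (f (insert j P) - f P + 2 * ε) := mul_le_mul_of_nonneg_right hcard hgain

theorem approx_greedy_gap_le_pow_mul (hmono : Monotone f)
    (hsub : ∀ S T : Finset α, S ⊆ T → ∀ i ∉ T,
      f (insert i T) - f T ≤ f (insert i S) - f S)
    {ε : ℝ} (hε : 0 ≤ ε) {O : Finset α → α → ℝ}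
    (hO : ∀ (S : Finset α) (i : α), i ∉ S →
      f (insert i S) - f S - ε ≤ O S i ∧ O S i ≤ f (insert i S) - f S + ε)
    {k : ℕ} {S : ℕ → Finset α} {j : ℕ → α}
    (hstep : ∀ t < k, j t ∉ S t ∧ S (t + 1) = insert (j t) (S t) ∧
      ∀ i ∉ S t, O (S t) i ≤ O (S t) (j t))
    {T : Finset α} (hT : #T ≤ k) :
    f T - 2 * k * ε - f (S k) ≤ (1 - 1 / k) ^ k * (f T - 2 * k * ε - f (S 0)) := by
  have hratio : (0 : ℝ) ≤ 1 - 1 / k := by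
    rcases k.eq_zero_or_pos with rfl | hkpos
    · simp
    · simp [Nat.one_le_cast.mpr hkpos, inv_le_one_of_one_le₀]
  refine le_geom (u := fun t => f T - 2 * k * ε - f (S t)) hratio k fun t ht => ?_
  obtain ⟨hj, hS, hmax⟩ := hstep t ht
  have hkpos : (0 : ℝ) < k := by exact_mod_cast t.zero_le.trans_lt ht
  have hgap := sub_le_mul_approx_greedy_gain hmono hsub hε (hO (S t)) hj hmax hT
  rw [← hS] at hgap
  field_simp
  linarith

end SetFunction

theorem approx_greedy_submodular_cardinality_general
    (ε : ℝ) (hε : 0 < ε)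
    (n k : ℕ) (hk1 : 1 ≤ k)
    (f : Finset (Fin n) → ℝ)
    (hmono : ∀ S T : Finset (Fin n), S ⊆ T → f S ≤ f T)
    (hsub : ∀ S T : Finset (Fin n), S ⊆ T → ∀ i ∉ T,
      f (insert i T) - f T ≤ f (insert i S) - f S)
    (hf0 : f ∅ = 0)
    (O : Finset (Fin n) → Fin n → ℝ)
    (hO : ∀ (S : Finset (Fin n)) (i : Fin n), i ∉ S →
      f (insert i S) - f S - ε ≤ O S i ∧ O S i ≤ f (insert i S) - f S + ε)
    (S : ℕ → Finset (Fin n)) (j : ℕ → Fin n)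
    (hS0 : S 0 = ∅)
    (hstep : ∀ t, 1 ≤ t → t ≤ k →
      j t ∉ S (t - 1) ∧ S t = insert (j t) (S (t - 1)) ∧
      ∀ i, i ∉ S (t - 1) → O (S (t - 1)) i ≤ O (S (t - 1)) (j t))
    (T : Finset (Fin n)) (hT : T.card = k) :
    f (S k) ≥ (1 - 1 / Real.exp 1) * f T - (k : ℝ) * (2 - 1 / Real.exp 1) * ε := by
  have hgap := approx_greedy_gap_le_pow_mul hmono hsub hε.le hO (j := fun t => j (t + 1))
    (fun t ht => by simpa using hstep (t + 1) (by omega) ht) hT.le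
  rw [hS0, hf0, sub_zero] at hgap
  have hpow : (1 - 1 / (k : ℝ)) ^ k ≤ 1 / Real.exp 1 := by
    rw [one_div (Real.exp 1), ← Real.exp_neg]
    exact Real.one_sub_div_pow_le_exp_neg (by exact_mod_cast hk1)
  have hinv_exp : 1 / Real.exp 1 ≤ 1 := by
    rw [div_le_one (Real.exp_pos 1)]
    exact Real.one_le_exp zero_le_one
  have hSk : 0 ≤ f (S k) := hf0 ▸ hmono ∅ (S k) (empty_subset _)
  have hkε : 0 ≤ 1 / Real.exp 1 * (k * ε) := by positivity
  rcases le_total (2 * k * ε) (f T) with hlarge | hsmall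
  · linarith [mul_le_mul_of_nonneg_right hpow (sub_nonneg.mpr hlarge)]
  · linarith [mul_le_mul_of_nonneg_left hsmall (sub_nonneg.mpr hinv_exp)]

/-- The greedy algorithm driven by an `ε`-additively-approximate
marginal-gain oracle achieves `f(S_k) ≥ (1 - 1/e) · OPT - k(2 - 1/e)ε`. -/
theorem approx_greedy_submodular_cardinality
    (ε : ℝ) (hε : 0 < ε)
    (n k : ℕ) (hk1 : 1 ≤ k) (hkn : k ≤ n)
    (f : Finset (Fin n) → ℝ)
    (hmono : ∀ S T : Finset (Fin n), S ⊆ T → f S ≤ f T)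
    (hsub : ∀ S T : Finset (Fin n), S ⊆ T → ∀ i ∉ T,
      f (insert i T) - f T ≤ f (insert i S) - f S)
    (hf0 : f ∅ = 0)
    (O : Finset (Fin n) → Fin n → ℝ)
    (hO : ∀ (S : Finset (Fin n)) (i : Fin n), i ∉ S →
      f (insert i S) - f S - ε ≤ O S i ∧ O S i ≤ f (insert i S) - f S + ε)
    (S : ℕ → Finset (Fin n)) (j : ℕ → Fin n)
    (hS0 : S 0 = ∅)
    (hstep : ∀ t, 1 ≤ t → t ≤ k →
      j t ∉ S (t - 1) ∧ S t = insert (j t) (S (t - 1)) ∧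
      ∀ i, i ∉ S (t - 1) → O (S (t - 1)) i ≤ O (S (t - 1)) (j t))
    (T : Finset (Fin n)) (hT : T.card = k) :
    f (S k) ≥ (1 - 1 / Real.exp 1) * f T - (k : ℝ) * (2 - 1 / Real.exp 1) * ε :=
  approx_greedy_submodular_cardinality_general ε hε n k hk1 f hmono hsub hf0 O hO S j hS0 hstep T hT
end

section
/- Let ε > 0, let M = ([n], 𝓘) be a matroid of rank r, and let f : 2^{[n]} → ℝ be a monotone submodular set function with f(∅) = 0. Suppose O : 2^{[n]} × [n] → ℝ satisfies Δ(i|S) − ε ≤ O(S, i) ≤ Δ(i|S) + ε for every S ⊆ [n] and i ∈ [n] \ S. Define S_0 = ∅ and, for t = 1, …, r, let S_t = S_{t−1} ∪ {j_t} where j_t maximizes O(S_{t−1}, j) over all j ∈ [n] \ S_{t−1} with S_{t−1} ∪ {j} ∈ 𝓘. Then f(S_r) ≥ (1/2) · max_{T ∈ 𝓘} f(T) − r·ε. -/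
/-!
Every `A ⊆ T \ S_r` can augment each greedy set `S_t` with `t < #A`, which is Hall's condition;
so Hall's theorem assigns to the elements `o ∈ T \ S_r` pairwise distinct greedy steps `t < r` at which
`o` was a feasible candidate. At that step the oracle preferred `j_{t+1}`, so by submodularity
`Δ(o | S_r) ≤ Δ(o | S_t) ≤ Δ(j_{t+1} | S_t) + 2ε`. Summing over `o` and telescoping the gains,
`f T - f S_r ≤ ∑_{o ∈ T \ S_r} Δ(o | S_r) ≤ f S_r + 2rε`.
-/

open Finset

variable {α : Type*} [DecidableEq α]

def IsSubmodular (f : Finset α → ℝ) : Prop :=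
  ∀ S T : Finset α, S ⊆ T → ∀ i ∉ T, f (insert i T) - f T ≤ f (insert i S) - f S

theorem IsSubmodular.sub_le_sum_marginal {f : Finset α → ℝ} (hf : IsSubmodular f)
    (A B : Finset α) : f (A ∪ B) - f B ≤ ∑ o ∈ A \ B, (f (insert o B) - f B) := by
  induction A using Finset.induction_on with
  | empty => simp
  | @insert a A haA ih =>
    by_cases haB : a ∈ B
    · rwa [insert_union, insert_eq_of_mem (mem_union_right _ haB), insert_sdiff_of_mem _ haB]
    · have hgain := hf B (A ∪ B) subset_union_right a (by simp [haA, haB])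
      rw [insert_union, insert_sdiff_of_notMem _ haB, sum_insert (by simp [haA])]
      linarith

theorem IsSubmodular.marginal_le_of_oracle_le {f : Finset α → ℝ} (hf : IsSubmodular f)
    {O : Finset α → α → ℝ} {ε : ℝ}
    (hO : ∀ (S : Finset α) (i : α), i ∉ S →
      f (insert i S) - f S - ε ≤ O S i ∧ O S i ≤ f (insert i S) - f S + ε)
    {A U : Finset α} {o j : α} (hAU : A ⊆ U) (hoU : o ∉ U) (hjA : j ∉ A)
    (hoj : O A o ≤ O A j) :
    f (insert o U) - f U ≤ f (insert j A) - f A + 2 * ε := by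
  have hdim := hf A U hAU o hoU
  have ho := (hO A o fun h => hoU (hAU h)).1
  have hj := (hO A j hjA).2
  linarith

theorem sum_le_sum_of_injective {ι κ M : Type*} [Fintype ι] [AddCommMonoid M] [PartialOrder M]
    [IsOrderedAddMonoid M] {t : Finset κ} {a : ι → M} {b : κ → M} {φ : ι → κ}
    (hφ : φ.Injective) (hφt : ∀ i, φ i ∈ t) (hab : ∀ i, a i ≤ b (φ i))
    (hb : ∀ k ∈ t, 0 ≤ b k) : ∑ i, a i ≤ ∑ k ∈ t, b k :=
  calc ∑ i, a i ≤ ∑ i, b (φ i) := sum_le_sum fun i _ => hab i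
    _ = ∑ k ∈ univ.map ⟨φ, hφ⟩, b k := (sum_map univ ⟨φ, hφ⟩ b).symm
    _ ≤ ∑ k ∈ t, b k :=
      sum_le_sum_of_subset_of_nonneg (by simpa [subset_iff] using hφt) fun k hk _ => hb k hk

section Chain

variable {S : ℕ → Finset α} {j : ℕ → α} {r : ℕ}

theorem card_chain (hS0 : S 0 = ∅)
    (hsucc : ∀ t < r, j (t + 1) ∉ S t ∧ S (t + 1) = insert (j (t + 1)) (S t)) :
    ∀ t ≤ r, #(S t) = t
  | 0, _ => by simp [hS0]
  | t + 1, ht => by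
    obtain ⟨hj, hS⟩ := hsucc t ht
    rw [hS, card_insert_of_notMem hj, card_chain hS0 hsucc t (Nat.le_of_succ_le ht)]

theorem chain_subset_last
    (hsucc : ∀ t < r, j (t + 1) ∉ S t ∧ S (t + 1) = insert (j (t + 1)) (S t))
    {t : ℕ} (ht : t ≤ r) : S t ⊆ S r :=
  Nat.decreasingInduction (motive := fun t _ => S t ⊆ S r)
    (fun k hk ih => (hsucc k hk).2 ▸ subset_insert _ _ |>.trans ih) subset_rfl ht

end Chain

section Matroid

variable {ℐ : Set (Finset α)} {S : ℕ → Finset α} {r : ℕ}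
  (hdown : ∀ A B : Finset α, A ⊆ B → B ∈ ℐ → A ∈ ℐ)
  (haug : ∀ A ∈ ℐ, ∀ B ∈ ℐ, #A < #B → ∃ x ∈ B \ A, insert x A ∈ ℐ)
include hdown haug

theorem exists_injective_augmenting_step (hS : ∀ t < r, S t ∈ ℐ ∧ #(S t) = t)
    {B : Finset α} (hB : B ∈ ℐ) (hBr : #B ≤ r) :
    ∃ φ : B → ℕ, φ.Injective ∧
      ∀ o : B, φ o < r ∧ (o : α) ∉ S (φ o) ∧ insert (o : α) (S (φ o)) ∈ ℐ := by
  classical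
  let steps : B → Finset ℕ := fun o =>
    (range r).filter fun t => (o : α) ∉ S t ∧ insert (o : α) (S t) ∈ ℐ
  suffices hall : ∀ s : Finset B, #s ≤ #(s.biUnion steps) by
    obtain ⟨φ, hφ, hφs⟩ := (all_card_le_biUnion_card_iff_exists_injective steps).mp hall
    exact ⟨φ, hφ, fun o => by simpa [steps] using hφs o⟩
  intro s
  set A := s.map (Function.Embedding.subtype _)
  have hAB : A ⊆ B := fun _ hx => property_of_mem_map_subtype s hx
  have hA : A ∈ ℐ := hdown A B hAB hB
  have hAs : #A = #s := card_map _
  have hsr : #s ≤ r := hAs ▸ (card_le_card hAB).trans hBr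
  -- Each of the first `#s` greedy sets is smaller than `A`, so it can be augmented from `A`.
  calc #s = #(range #s) := (card_range _).symm
    _ ≤ #(s.biUnion steps) := card_le_card fun u hu => by
      have hu : u < #s := mem_range.mp hu
      obtain ⟨hSu, hcard⟩ := hS u (by omega)
      obtain ⟨x, hx, hxI⟩ := haug _ hSu A hA (by omega)
      obtain ⟨hxA, hxS⟩ := mem_sdiff.mp hx
      obtain ⟨y, hy, rfl⟩ := mem_map.mp hxA
      exact mem_biUnion.mpr ⟨y, hy, mem_filter.mpr ⟨mem_range.mpr (by omega), hxS, hxI⟩⟩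

theorem sum_marginal_le_sum_greedy_gain {f : Finset α → ℝ} (hmono : Monotone f)
    (hsub : IsSubmodular f) {O : Finset α → α → ℝ} {ε : ℝ} (hε : 0 ≤ ε)
    (hO : ∀ (S : Finset α) (i : α), i ∉ S →
      f (insert i S) - f S - ε ≤ O S i ∧ O S i ≤ f (insert i S) - f S + ε)
    {j : ℕ → α} (hS : ∀ t < r, S t ∈ ℐ ∧ #(S t) = t)
    (hsucc : ∀ t < r, j (t + 1) ∉ S t ∧ S (t + 1) = insert (j (t + 1)) (S t))
    (hgreedy : ∀ t < r, ∀ i ∉ S t, insert i (S t) ∈ ℐ → O (S t) i ≤ O (S t) (j (t + 1)))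
    {B : Finset α} (hB : B ∈ ℐ) (hBr : #B ≤ r) (hBS : Disjoint B (S r)) :
    ∑ o ∈ B, (f (insert o (S r)) - f (S r)) ≤
      ∑ t ∈ range r, (f (S (t + 1)) - f (S t) + 2 * ε) := by
  obtain ⟨φ, hφ, hφr⟩ := exists_injective_augmenting_step hdown haug hS hB hBr
  rw [← sum_coe_sort]
  refine sum_le_sum_of_injective hφ (fun o => mem_range.mpr (hφr o).1) (fun o => ?_)
    fun t ht => ?_
  · obtain ⟨hφo, hoS, hoI⟩ := hφr o
    obtain ⟨hj, hS⟩ := hsucc (φ o) hφo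
    rw [hS]
    exact hsub.marginal_le_of_oracle_le hO (chain_subset_last hsucc hφo.le)
      (disjoint_left.mp hBS o.2) hj (hgreedy _ hφo o hoS hoI)
  · have := hmono ((hsucc t (mem_range.mp ht)).2 ▸ subset_insert _ _ : S t ⊆ S (t + 1))
    linarith

end Matroid

theorem approx_greedy_submodular_matroid_general
    (ε : ℝ) (hε : 0 < ε)
    (n r : ℕ)
    (ℐ : Set (Finset (Fin n)))
    (hempty : ∅ ∈ ℐ)
    (hdown : ∀ A B : Finset (Fin n), A ⊆ B → B ∈ ℐ → A ∈ ℐ)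
    (haug : ∀ A ∈ ℐ, ∀ B ∈ ℐ, A.card < B.card →
      ∃ x ∈ B \ A, insert x A ∈ ℐ)
    (hrank_le : ∀ A ∈ ℐ, A.card ≤ r)
    (f : Finset (Fin n) → ℝ)
    (hmono : ∀ S T : Finset (Fin n), S ⊆ T → f S ≤ f T)
    (hsub : ∀ S T : Finset (Fin n), S ⊆ T → ∀ i ∉ T,
      f (insert i T) - f T ≤ f (insert i S) - f S)
    (hf0 : f ∅ = 0)
    (O : Finset (Fin n) → Fin n → ℝ)
    (hO : ∀ (S : Finset (Fin n)) (i : Fin n), i ∉ S →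
      f (insert i S) - f S - ε ≤ O S i ∧ O S i ≤ f (insert i S) - f S + ε)
    (S : ℕ → Finset (Fin n)) (j : ℕ → Fin n)
    (hS0 : S 0 = ∅)
    (hstep : ∀ t, 1 ≤ t → t ≤ r →
      j t ∉ S (t - 1) ∧ insert (j t) (S (t - 1)) ∈ ℐ ∧
      S t = insert (j t) (S (t - 1)) ∧
      ∀ i, i ∉ S (t - 1) → insert i (S (t - 1)) ∈ ℐ →
        O (S (t - 1)) i ≤ O (S (t - 1)) (j t))
    (T : Finset (Fin n)) (hT : T ∈ ℐ) :
    f (S r) ≥ (1 / 2) * f T - (r : ℝ) * ε := by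
  have hsucc (t : ℕ) (ht : t < r) : j (t + 1) ∉ S t ∧ S (t + 1) = insert (j (t + 1)) (S t) :=
    ⟨(hstep (t + 1) (by omega) ht).1, (hstep (t + 1) (by omega) ht).2.2.1⟩
  have hmem : ∀ t < r, S t ∈ ℐ
    | 0, _ => hS0 ▸ hempty
    | t + 1, ht => (hsucc t (by omega)).2 ▸ (hstep (t + 1) (by omega) ht.le).2.1
  have hgreedy (t : ℕ) (ht : t < r) := (hstep (t + 1) (by omega) ht).2.2.2
  have hT_le : f T ≤ 2 * f (S r) + 2 * r * ε :=
    calc f T ≤ f (T ∪ S r) := hmono _ _ subset_union_left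
      _ ≤ f (S r) + ∑ o ∈ T \ S r, (f (insert o (S r)) - f (S r)) := by
        linarith [IsSubmodular.sub_le_sum_marginal hsub T (S r)]
      _ ≤ f (S r) + ∑ t ∈ range r, (f (S (t + 1)) - f (S t) + 2 * ε) := by
        gcongr
        exact sum_marginal_le_sum_greedy_gain hdown haug hmono hsub hε.le hO
          (fun t ht => ⟨hmem t ht, card_chain hS0 hsucc t ht.le⟩) hsucc hgreedy
          (hdown _ T sdiff_subset hT) ((card_le_card sdiff_subset).trans (hrank_le T hT))
          sdiff_disjoint
      _ = 2 * f (S r) + 2 * r * ε := by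
        rw [sum_add_distrib, sum_range_sub (fun t => f (S t)), hS0, hf0, sum_const, card_range,
          nsmul_eq_mul]
        ring
  linarith

/-- The approximate greedy algorithm for monotone submodular maximization
subject to a matroid constraint, with an `ε`-additively-approximate marginal-gain
oracle, achieves `f(S_r) ≥ (1/2) · max_{T ∈ 𝓘} f(T) - r·ε`. -/
theorem approx_greedy_submodular_matroid
    (ε : ℝ) (hε : 0 < ε)
    (n r : ℕ)
    (ℐ : Set (Finset (Fin n)))
    (hempty : ∅ ∈ ℐ)
    (hdown : ∀ A B : Finset (Fin n), A ⊆ B → B ∈ ℐ → A ∈ ℐ)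
    (haug : ∀ A ∈ ℐ, ∀ B ∈ ℐ, A.card < B.card →
      ∃ x ∈ B \ A, insert x A ∈ ℐ)
    (hrank_le : ∀ A ∈ ℐ, A.card ≤ r)
    (hrank_eq : ∃ B ∈ ℐ, B.card = r)
    (f : Finset (Fin n) → ℝ)
    (hmono : ∀ S T : Finset (Fin n), S ⊆ T → f S ≤ f T)
    (hsub : ∀ S T : Finset (Fin n), S ⊆ T → ∀ i ∉ T,
      f (insert i T) - f T ≤ f (insert i S) - f S)
    (hf0 : f ∅ = 0)
    (O : Finset (Fin n) → Fin n → ℝ)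
    (hO : ∀ (S : Finset (Fin n)) (i : Fin n), i ∉ S →
      f (insert i S) - f S - ε ≤ O S i ∧ O S i ≤ f (insert i S) - f S + ε)
    (S : ℕ → Finset (Fin n)) (j : ℕ → Fin n)
    (hS0 : S 0 = ∅)
    (hstep : ∀ t, 1 ≤ t → t ≤ r →
      j t ∉ S (t - 1) ∧ insert (j t) (S (t - 1)) ∈ ℐ ∧
      S t = insert (j t) (S (t - 1)) ∧
      ∀ i, i ∉ S (t - 1) → insert i (S (t - 1)) ∈ ℐ →
        O (S (t - 1)) i ≤ O (S (t - 1)) (j t))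
    (T : Finset (Fin n)) (hT : T ∈ ℐ) :
    f (S r) ≥ (1 / 2) * f T - (r : ℝ) * ε :=
  approx_greedy_submodular_matroid_general ε hε n r ℐ hempty hdown haug hrank_le f hmono hsub hf0 O
    hO S j hS0 hstep T hT
end

section
/- Let L > 0, ε ≥ 0, V ∈ ℝ, m ≥ 1, and let c_1, …, c_m be reals with 1 ≤ c_i ≤ L for all i. Suppose F_0 = 0 and, for every i = 1, …, m, F_i ≥ (c_i/L)·V + (1 − c_i/L)·F_{i−1} − 2ε. Then for every i = 1, …, m, F_i ≥ (1 − Π_{k=1}^{i} (1 − c_k/L))·V − 2Lε. -/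
/-!
Track the gap `V - F_i`: it obeys `gap_i ≤ (1 - c_i/L) · gap_{i-1} + 2ε` with `gap_0 = V`.
Unrolling such a recursion `g_i ≤ a_i g_{i-1} + e` gives `g_n ≤ (∏ a_k) g_0 + B` for any
`B ≥ 0` absorbing one step of error, `a_i B + e ≤ B`; here `B = 2Lε` works because
`(1 - c_i/L) · 2Lε + 2ε = 2Lε - 2(c_i - 1)ε` and `c_i ≥ 1`.
-/

open Finset

theorem le_prod_mul_add_of_le_mul_add {a g : ℕ → ℝ} {e B : ℝ} {m : ℕ} (hB : 0 ≤ B)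
    (ha : ∀ i, 1 ≤ i → i ≤ m → 0 ≤ a i ∧ a i * B + e ≤ B)
    (hg : ∀ i, 1 ≤ i → i ≤ m → g i ≤ a i * g (i - 1) + e) :
    ∀ n ≤ m, g n ≤ (∏ k ∈ Icc 1 n, a k) * g 0 + B := by
  intro n
  induction n with
  | zero => intro _; simp [hB]
  | succ n ih =>
    intro hn
    obtain ⟨ha0, haB⟩ := ha (n + 1) (by omega) hn
    have hstep := hg (n + 1) (by omega) hn
    rw [Nat.add_sub_cancel] at hstep
    have hprev := mul_le_mul_of_nonneg_left (ih (by omega)) ha0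
    rw [prod_Icc_succ_top (by omega)]
    linarith

theorem knapsack_greedy_recursion_general
    (L ε V : ℝ) (hL : 0 < L) (hε : 0 ≤ ε)
    (m : ℕ)
    (c : ℕ → ℝ) (hc : ∀ i, 1 ≤ i → i ≤ m → 1 ≤ c i ∧ c i ≤ L)
    (F : ℕ → ℝ) (hF0 : F 0 = 0)
    (hFrec : ∀ i, 1 ≤ i → i ≤ m →
      (c i / L) * V + (1 - c i / L) * F (i - 1) - 2 * ε ≤ F i) :
    ∀ i, 1 ≤ i → i ≤ m →
      (1 - ∏ k ∈ Finset.Icc 1 i, (1 - c k / L)) * V - 2 * L * ε ≤ F i := by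
  have hstep : ∀ i, 1 ≤ i → i ≤ m →
      0 ≤ 1 - c i / L ∧ (1 - c i / L) * (2 * L * ε) + 2 * ε ≤ 2 * L * ε := by
    intro i hi him
    obtain ⟨hc1, hcL⟩ := hc i hi him
    have hexpand : (1 - c i / L) * (2 * L * ε) + 2 * ε = 2 * L * ε - 2 * (c i - 1) * ε := by
      field_simp
      ring
    refine ⟨sub_nonneg.2 ((div_le_one hL).2 hcL), ?_⟩
    linarith [mul_nonneg (sub_nonneg.2 hc1) hε]
  have hgap : ∀ i, 1 ≤ i → i ≤ m →
      V - F i ≤ (1 - c i / L) * (V - F (i - 1)) + 2 * ε := by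
    intro i hi him
    linarith [hFrec i hi him]
  intro i _ him
  have hbound := le_prod_mul_add_of_le_mul_add (by positivity) hstep hgap i him
  rw [hF0] at hbound
  linarith

/-- The recursive lower bound in the knapsack greedy analysis:
if `F_0 = 0` and `F_i ≥ (c_i/L)·V + (1 - c_i/L)·F_{i-1} - 2ε`, then
`F_i ≥ (1 - Π_{k=1}^{i} (1 - c_k/L))·V - 2Lε`. -/
theorem knapsack_greedy_recursion
    (L ε V : ℝ) (hL : 0 < L) (hε : 0 ≤ ε)
    (m : ℕ) (hm : 1 ≤ m)
    (c : ℕ → ℝ) (hc : ∀ i, 1 ≤ i → i ≤ m → 1 ≤ c i ∧ c i ≤ L)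
    (F : ℕ → ℝ) (hF0 : F 0 = 0)
    (hFrec : ∀ i, 1 ≤ i → i ≤ m →
      (c i / L) * V + (1 - c i / L) * F (i - 1) - 2 * ε ≤ F i) :
    ∀ i, 1 ≤ i → i ≤ m →
      (1 - ∏ k ∈ Finset.Icc 1 i, (1 - c k / L)) * V - 2 * L * ε ≤ F i :=
  knapsack_greedy_recursion_general L ε V hL hε m c hc F hF0 hFrec
end
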